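/- Let G be a finitely generated group, μ a probability measure on G whose support generates G as a semigroup, with spectral radius ρ(μ) < 1 (e.g. G nonamenable). Then there exist 0 < φ < 1 and D > 0 such that for all x, y ∈ G and all M ∈ ℕ, the total weight of admissible trajectories from x to y of length at least M is at most φ^{M − D·d(x,y)} · 𝒢(x,y). -/

import Mathlib

open scoped Classical

/-- `n`-fold convolution power of a measure `μ` on a countable group:
`p^n(x,y) = μ^{*n}(x⁻¹y)` is `convPow μ n (x⁻¹ * y)`. -/
noncomputable def convPow {G : Type*} [Group G] (μ : G → ℝ) : ℕ → G → ℝ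
  | 0 => fun g => if g = 1 then 1 else 0
  | n + 1 => fun g => ∑' h : G, μ h * convPow μ n (h⁻¹ * g)

/-- Green's function `𝒢(x,y) = ∑_{n ≥ 0} μ^{*n}(x⁻¹ y)`. -/
noncomputable def green {G : Type*} [Group G] (μ : G → ℝ) (x y : G) : ℝ :=
  ∑' n : ℕ, convPow μ n (x⁻¹ * y)

/-- Word distance with respect to a generating set `S`. -/
noncomputable def wordDist {G : Type*} [Group G] (S : Set G) (x y : G) : ℕ :=
  sInf {n : ℕ | ∃ l : List G, l.length = n ∧ (∀ a ∈ l, a ∈ S) ∧ l.prod = x⁻¹ * y}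


/-!
Write `T_M(v) = ∑_{n ≥ M} p^n(v)` for the tails of the Green function. Chapman–Kolmogorov gives
`p^m(w) T_M(u) ≤ T_M(wu)`. If `v` has word length `d`, both `v` and `v⁻¹` are reached with
probability at least `c^d` for a constant `c > 0`, so `c^d T_M(v) ≤ T_M(1)` and
`c^d 𝒢(1) ≤ 𝒢(v)`; everything is reduced to the identity at the cost of a factor `c^{-2d}`,
which is absorbed in `φ^{-Dd}`. At the identity, `T_M(1) ≤ t^{-M} ∑ t^n p^n(1)` decays
geometrically because `r(μ) > 1`, while `T_M(1) ≤ 𝒢(1) - 1 < 𝒢(1)` for `M ≥ 1` because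
`p^0(1) = 1`; together these give `T_M(1) ≤ φ^M 𝒢(1)` for a single `φ < 1`.
-/

open Filter

theorem exists_pow_bound_of_le_of_le_geometric {a : ℕ → ℝ} {b C r : ℝ} (hb : b < 1)
    (hr₀ : 0 ≤ r) (hr₁ : r < 1) (ha₀ : a 0 ≤ 1) (hab : ∀ M, 1 ≤ M → a M ≤ b)
    (haC : ∀ M, a M ≤ C * r ^ M) :
    ∃ φ : ℝ, 0 < φ ∧ φ < 1 ∧ ∀ M, a M ≤ φ ^ M := by
  obtain ⟨s, hrs, hs₁⟩ := exists_between hr₁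
  have hs₀ : 0 < s := hr₀.trans_lt hrs
  obtain ⟨N, hN⟩ : ∃ N, ∀ M ≥ N, C * (r / s) ^ M < 1 :=
    eventually_atTop.mp <| (mul_zero C ▸ (tendsto_pow_atTop_nhds_zero_of_lt_one
      (div_nonneg hr₀ hs₀.le) ((div_lt_one hs₀).mpr hrs)).const_mul C).eventually_lt_const one_pos
  set b' := max b 0
  set ψ := b' ^ ((N + 1 : ℕ) : ℝ)⁻¹
  have hψ : b' = ψ ^ (N + 1) := (Real.rpow_inv_natCast_pow (le_max_right _ _) N.succ_ne_zero).symm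
  have hψ₀ : 0 ≤ ψ := Real.rpow_nonneg (le_max_right _ _) _
  have hψ₁ : ψ < 1 := Real.rpow_lt_one (le_max_right _ _) (max_lt hb one_pos) (by positivity)
  refine ⟨max s ψ, lt_max_of_lt_left hs₀, max_lt hs₁ hψ₁, fun M => ?_⟩
  rcases Nat.eq_zero_or_pos M with rfl | hM
  · simpa using ha₀
  rcases lt_or_ge M (N + 1) with hMN | hMN
  · calc a M ≤ b' := (hab M hM).trans (le_max_left _ _)
      _ = ψ ^ (N + 1) := hψ
      _ ≤ ψ ^ M := pow_le_pow_of_le_one hψ₀ hψ₁.le hMN.le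
      _ ≤ max s ψ ^ M := pow_le_pow_left₀ hψ₀ (le_max_right _ _) M
  · calc a M ≤ C * r ^ M := haC M
      _ = C * (r / s) ^ M * s ^ M := by rw [div_pow]; field_simp
      _ ≤ 1 * s ^ M := by gcongr; exact (hN M (by omega)).le
      _ ≤ max s ψ ^ M := by rw [one_mul]; exact pow_le_pow_left₀ hs₀.le (le_max_left _ _) M

theorem exists_pos_rpow_le {φ x : ℝ} (hφ₀ : 0 < φ) (hφ₁ : φ < 1) (hx : 0 < x) :
    ∃ D : ℝ, 0 < D ∧ φ ^ D ≤ x :=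
  ⟨max 1 (Real.logb φ x), one_pos.trans_le (le_max_left _ _),
    (Real.rpow_le_rpow_of_exponent_ge hφ₀ hφ₁.le (le_max_right _ _)).trans_eq
      (Real.rpow_logb hφ₀ hφ₁.ne hx)⟩

theorem le_rpow_sub_mul_of_pow_mul_le {φ c D A T : ℝ} {d M : ℕ} (hφ : 0 < φ) (hc : 0 < c)
    (hD : φ ^ D ≤ c) (hA : 0 ≤ A) (hT : c ^ d * T ≤ φ ^ M * A) :
    T ≤ φ ^ ((M : ℝ) - D * d) * A := by
  have hφD : 0 < φ ^ D := Real.rpow_pos_of_pos hφ D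
  have hsplit : φ ^ ((M : ℝ) - D * d) = φ ^ M / (φ ^ D) ^ d := by
    rw [Real.rpow_sub hφ, Real.rpow_natCast, Real.rpow_mul_natCast hφ.le]
  calc T ≤ φ ^ M * A / c ^ d := by rw [le_div_iff₀ (by positivity)]; linarith
    _ ≤ φ ^ M * A / (φ ^ D) ^ d := by gcongr
    _ = φ ^ ((M : ℝ) - D * d) * A := by rw [hsplit]; ring

theorem exists_list_length_eq_wordDist {G : Type*} [Group G] {S : Set G}
    (hS : ∀ s ∈ S, s⁻¹ ∈ S) (hSgen : Subgroup.closure S = ⊤) (x y : G) :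
    ∃ l : List G, l.length = wordDist S x y ∧ (∀ a ∈ l, a ∈ S) ∧ l.prod = x⁻¹ * y := by
  have hmem : x⁻¹ * y ∈ (Subgroup.closure S).toSubmonoid := hSgen ▸ trivial
  rw [Subgroup.closure_toSubmonoid] at hmem
  obtain ⟨l, hl, hprod⟩ := Submonoid.exists_list_of_mem_closure hmem
  have hlS (a : G) (ha : a ∈ l) : a ∈ S := (hl a ha).elim id fun h => by simpa using hS _ h
  exact Nat.sInf_mem (s := {n | ∃ l : List G, l.length = n ∧ (∀ a ∈ l, a ∈ S) ∧ l.prod = x⁻¹ * y})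
    ⟨l.length, l, rfl, hlS, hprod⟩

section RandomWalk

variable {G : Type*} [Group G] {μ : G → ℝ}

theorem convPow_zero_one : convPow μ 0 (1 : G) = 1 := by simp [convPow]

theorem convPow_one (μ : G → ℝ) (g : G) : convPow μ 1 g = μ g := by
  have hterm (h : G) : μ h * convPow μ 0 (h⁻¹ * g) = if h = g then μ g else 0 := by
    by_cases hh : h = g
    · subst hh; simp [convPow]
    · simp [convPow, inv_mul_eq_one, hh]
  rw [show convPow μ 1 g = ∑' h, μ h * convPow μ 0 (h⁻¹ * g) from rfl, tsum_congr hterm,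
    tsum_ite_eq]

variable (hμ₀ : ∀ g, 0 ≤ μ g)
include hμ₀

theorem convPow_nonneg (n : ℕ) (g : G) : 0 ≤ convPow μ n g := by
  induction n generalizing g with
  | zero => simp only [convPow]; split <;> norm_num
  | succ n ih => exact tsum_nonneg fun h => mul_nonneg (hμ₀ h) (ih _)

theorem summable_convPow_of_summable_pow_mul {t : ℝ} (ht : 1 ≤ t) {u : G}
    (hs : Summable fun n => t ^ n * convPow μ n u) : Summable fun n => convPow μ n u :=
  hs.of_nonneg_of_le (convPow_nonneg hμ₀ · u)
    fun n => le_mul_of_one_le_left (convPow_nonneg hμ₀ n u) (one_le_pow₀ ht)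

theorem pow_mul_tsum_tail_le {t : ℝ} (ht : 1 ≤ t) {u : G}
    (hs : Summable fun n => t ^ n * convPow μ n u) (M : ℕ) :
    t ^ M * ∑' n, convPow μ (M + n) u ≤ ∑' n, t ^ n * convPow μ n u := by
  have hle (n : ℕ) : t ^ M * convPow μ (M + n) u ≤ t ^ (M + n) * convPow μ (M + n) u :=
    mul_le_mul_of_nonneg_right (pow_le_pow_right₀ ht (by omega)) (convPow_nonneg hμ₀ _ _)
  rw [← tsum_mul_left]
  exact Summable.tsum_le_tsum_of_inj (M + ·) (add_right_injective M)
    (fun n _ => mul_nonneg (pow_nonneg (by linarith) n) (convPow_nonneg hμ₀ n u)) hle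
    ((hs.comp_injective (add_right_injective M)).of_nonneg_of_le
      (fun n => mul_nonneg (pow_nonneg (by linarith) M) (convPow_nonneg hμ₀ _ u)) hle) hs

theorem tsum_tail_one_le_sub_one (hs : Summable fun n => convPow μ n (1 : G)) {M : ℕ}
    (hM : 1 ≤ M) : ∑' n, convPow μ (M + n) (1 : G) ≤ ∑' n, convPow μ n (1 : G) - 1 := by
  have hhead : 1 ≤ ∑ i ∈ Finset.range M, convPow μ i (1 : G) :=
    convPow_zero_one (μ := μ) ▸ Finset.single_le_sum (fun i _ => convPow_nonneg hμ₀ i 1)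
      (Finset.mem_range.mpr hM)
  have hsplit := hs.sum_add_tsum_nat_add M
  simp only [add_comm _ M] at hsplit
  linarith

theorem exists_tsum_tail_one_le_pow_mul {t : ℝ} (ht : 1 < t)
    (hs : Summable fun n => t ^ n * convPow μ n (1 : G)) :
    ∃ φ : ℝ, 0 < φ ∧ φ < 1 ∧
      ∀ M, ∑' n, convPow μ (M + n) (1 : G) ≤ φ ^ M * ∑' n, convPow μ n (1 : G) := by
  have hs₁ := summable_convPow_of_summable_pow_mul hμ₀ ht.le hs
  set g := ∑' n, convPow μ n (1 : G)
  set K := ∑' n, t ^ n * convPow μ n (1 : G)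
  have hg : 1 ≤ g :=
    convPow_zero_one (μ := μ) ▸ hs₁.le_tsum 0 fun n _ => convPow_nonneg hμ₀ n 1
  have hg₀ : 0 < g := one_pos.trans_le hg
  obtain ⟨φ, hφ₀, hφ₁, hφ⟩ := exists_pow_bound_of_le_of_le_geometric
    (a := fun M => (∑' n, convPow μ (M + n) (1 : G)) / g) (b := 1 - 1 / g) (C := K / g)
    (r := t⁻¹) (by have := one_div_pos.mpr hg₀; linarith) (inv_nonneg.mpr (by linarith))
    (inv_lt_one_of_one_lt₀ ht) (by simp [g, div_self hg₀.ne'])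
    (fun M hM => by
      rw [div_le_iff₀ hg₀, sub_mul, one_div_mul_cancel hg₀.ne', one_mul]
      exact tsum_tail_one_le_sub_one hμ₀ hs₁ hM)
    (fun M => by
      rw [div_mul_eq_mul_div, div_le_div_iff_of_pos_right hg₀, inv_pow,
        le_mul_inv_iff₀ (by positivity), mul_comm]
      exact pow_mul_tsum_tail_le hμ₀ ht.le hs M)
  exact ⟨φ, hφ₀, hφ₁, fun M => (div_le_iff₀ hg₀).mp (hφ M)⟩

variable (hμ₁ : HasSum μ 1)
include hμ₁

theorem convPow_le_one (n : ℕ) (g : G) : convPow μ n g ≤ 1 := by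
  induction n generalizing g with
  | zero => simp only [convPow]; split <;> norm_num
  | succ n ih =>
    have hle (h : G) : μ h * convPow μ n (h⁻¹ * g) ≤ μ h := mul_le_of_le_one_right (hμ₀ h) (ih _)
    calc convPow μ (n + 1) g ≤ ∑' h, μ h :=
          Summable.tsum_le_tsum hle (hμ₁.summable.of_nonneg_of_le
            (fun h => mul_nonneg (hμ₀ h) (convPow_nonneg hμ₀ _ _)) hle) hμ₁.summable
      _ = 1 := hμ₁.tsum_eq

theorem convPow_mul_convPow_le (m n : ℕ) (h k : G) :
    convPow μ m h * convPow μ n k ≤ convPow μ (m + n) (h * k) := by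
  induction m generalizing h with
  | zero =>
    by_cases hh : h = 1
    · simp [convPow, hh]
    · simpa [convPow, hh] using convPow_nonneg hμ₀ n (h * k)
  | succ m ih =>
    have hsum (m : ℕ) (g : G) : Summable fun u => μ u * convPow μ m (u⁻¹ * g) :=
      hμ₁.summable.of_nonneg_of_le (fun u => mul_nonneg (hμ₀ u) (convPow_nonneg hμ₀ _ _))
        fun u => mul_le_of_le_one_right (hμ₀ u) (convPow_le_one hμ₀ hμ₁ _ _)
    rw [show m + 1 + n = m + n + 1 by omega]
    simp only [convPow]
    rw [← tsum_mul_right]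
    refine Summable.tsum_le_tsum (fun u => ?_) ((hsum m h).mul_right _) (hsum _ _)
    rw [mul_assoc, ← mul_assoc u⁻¹]
    exact mul_le_mul_of_nonneg_left (ih _) (hμ₀ u)

theorem exists_convPow_pos (hgen : Subsemigroup.closure {g : G | 0 < μ g} = ⊤) (g : G) :
    ∃ n, 0 < convPow μ n g := by
  have hg : g ∈ Subsemigroup.closure {g : G | 0 < μ g} := hgen ▸ trivial
  induction hg using Subsemigroup.closure_induction with
  | mem x hx => exact ⟨1, by rwa [convPow_one]⟩
  | mul x y _ _ hx hy =>
    obtain ⟨m, hm⟩ := hx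
    obtain ⟨n, hn⟩ := hy
    exact ⟨m + n, (mul_pos hm hn).trans_le (convPow_mul_convPow_le hμ₀ hμ₁ m n x y)⟩

theorem exists_pos_forall_le_convPow (hgen : Subsemigroup.closure {g : G | 0 < μ g} = ⊤)
    (S : Finset G) : ∃ c > 0, ∀ s ∈ S, ∃ n, c ≤ convPow μ n s := by
  induction S using Finset.induction_on with
  | empty => exact ⟨1, one_pos, by simp⟩
  | insert a S _ ih =>
    obtain ⟨c, hc, hcS⟩ := ih
    obtain ⟨n, hn⟩ := exists_convPow_pos hμ₀ hμ₁ hgen a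
    refine ⟨min c (convPow μ n a), lt_min hc hn, ?_⟩
    simp only [Finset.mem_insert, forall_eq_or_imp]
    exact ⟨⟨n, min_le_right _ _⟩, fun s hs => (hcS s hs).imp fun _ => (min_le_left _ _).trans⟩

theorem exists_pow_length_le_convPow_prod {S : Set G} {c : ℝ} (hc : 0 ≤ c)
    (hS : ∀ s ∈ S, ∃ n, c ≤ convPow μ n s) (l : List G) (hl : ∀ a ∈ l, a ∈ S) :
    ∃ m, c ^ l.length ≤ convPow μ m l.prod := by
  induction l with
  | nil => exact ⟨0, by simp [convPow]⟩
  | cons a l ih =>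
    obtain ⟨n, hn⟩ := hS a (hl a List.mem_cons_self)
    obtain ⟨m, hm⟩ := ih fun b hb => hl b (List.mem_cons_of_mem a hb)
    refine ⟨n + m, ?_⟩
    rw [List.length_cons, List.prod_cons, pow_succ']
    calc c * c ^ l.length ≤ convPow μ n a * convPow μ m l.prod :=
          mul_le_mul hn hm (pow_nonneg hc _) (convPow_nonneg hμ₀ _ _)
      _ ≤ convPow μ (n + m) (a * l.prod) := convPow_mul_convPow_le hμ₀ hμ₁ _ _ _ _

theorem exists_pow_length_le_convPow_prod_inv {S : Set G} (hS : ∀ s ∈ S, s⁻¹ ∈ S) {c : ℝ}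
    (hc : 0 ≤ c) (hcS : ∀ s ∈ S, ∃ n, c ≤ convPow μ n s) (l : List G) (hl : ∀ a ∈ l, a ∈ S) :
    ∃ m, c ^ l.length ≤ convPow μ m l.prod⁻¹ := by
  have hl' : ∀ a ∈ (l.map fun x => x⁻¹).reverse, a ∈ S := by
    simpa using fun a ha => by simpa using hS _ (hl _ ha)
  simpa [← List.prod_inv_reverse] using
    exists_pow_length_le_convPow_prod hμ₀ hμ₁ hc hcS _ hl'

variable (hsum : ∀ g : G, Summable fun n => convPow μ n g)
include hsum

theorem convPow_mul_tsum_tail_le (m M : ℕ) (w u : G) :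
    convPow μ m w * ∑' n, convPow μ (M + n) u ≤ ∑' n, convPow μ (M + n) (w * u) := by
  rw [← tsum_mul_left]
  refine Summable.tsum_le_tsum_of_inj (m + ·) (add_right_injective m)
    (fun _ _ => convPow_nonneg hμ₀ _ _) (fun n => ?_)
    (((hsum u).comp_injective (add_right_injective M)).mul_left _)
    ((hsum _).comp_injective (add_right_injective M))
  rw [show M + (m + n) = m + (M + n) by omega]
  exact convPow_mul_convPow_le hμ₀ hμ₁ _ _ _ _

theorem mul_mul_tsum_tail_le_of_le_convPow {φ a : ℝ} (hφ : 0 ≤ φ)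
    (hdecay : ∀ M, ∑' n, convPow μ (M + n) (1 : G) ≤ φ ^ M * ∑' n, convPow μ n (1 : G))
    (ha : 0 ≤ a) {v : G} {m m' : ℕ} (hm : a ≤ convPow μ m v) (hm' : a ≤ convPow μ m' v⁻¹)
    (M : ℕ) : a * (a * ∑' n, convPow μ (M + n) v) ≤ φ ^ M * ∑' n, convPow μ n v := by
  have htail := convPow_mul_tsum_tail_le hμ₀ hμ₁ hsum m' M v⁻¹ v
  have hgreen := convPow_mul_tsum_tail_le hμ₀ hμ₁ hsum m 0 v 1
  simp only [inv_mul_cancel, mul_one, zero_add] at htail hgreen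
  have hT : a * ∑' n, convPow μ (M + n) v ≤ φ ^ M * ∑' n, convPow μ n 1 :=
    (mul_le_mul_of_nonneg_right hm' (tsum_nonneg fun n => convPow_nonneg hμ₀ _ _)).trans
      (htail.trans (hdecay M))
  have hG : a * ∑' n, convPow μ n 1 ≤ ∑' n, convPow μ n v :=
    (mul_le_mul_of_nonneg_right hm (tsum_nonneg fun n => convPow_nonneg hμ₀ _ _)).trans hgreen
  calc a * (a * ∑' n, convPow μ (M + n) v) ≤ a * (φ ^ M * ∑' n, convPow μ n 1) :=
        mul_le_mul_of_nonneg_left hT ha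
    _ = φ ^ M * (a * ∑' n, convPow μ n 1) := by ring
    _ ≤ φ ^ M * ∑' n, convPow μ n v := mul_le_mul_of_nonneg_left hG (pow_nonneg hφ M)

end RandomWalk

theorem stmt5_general {G : Type*} [Group G]
    (S : Finset G) (hSsymm : ∀ s ∈ S, s⁻¹ ∈ (S : Set G))
    (hSgen : Subgroup.closure (S : Set G) = ⊤)
    (μ : G → ℝ) (hμ0 : ∀ g, 0 ≤ μ g) (hμ1 : HasSum μ 1)
    (hgen : Subsemigroup.closure {g : G | 0 < μ g} = ⊤)
    (hrad : ∃ t : ℝ, 1 < t ∧ ∀ x y : G,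
      Summable fun n : ℕ => t ^ n * convPow μ n (x⁻¹ * y)) :
    ∃ φ D : ℝ, 0 < φ ∧ φ < 1 ∧ 0 < D ∧ ∀ x y : G, ∀ M : ℕ,
      (∑' n : ℕ, convPow μ (M + n) (x⁻¹ * y)) ≤
        φ ^ ((M : ℝ) - D * (wordDist (S : Set G) x y : ℝ)) * green μ x y := by
  obtain ⟨t, ht, hrad⟩ := hrad
  have hs (v : G) : Summable fun n => t ^ n * convPow μ n v := by simpa using hrad 1 v
  have hsum (v : G) := summable_convPow_of_summable_pow_mul hμ0 ht.le (hs v)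
  obtain ⟨φ, hφ₀, hφ₁, hdecay⟩ := exists_tsum_tail_one_le_pow_mul hμ0 ht (hs 1)
  obtain ⟨c, hc, hcS⟩ := exists_pos_forall_le_convPow hμ0 hμ1 hgen S
  obtain ⟨D, hD₀, hD⟩ := exists_pos_rpow_le hφ₀ hφ₁ (pow_pos hc 2)
  refine ⟨φ, D, hφ₀, hφ₁, hD₀, fun x y M => ?_⟩
  obtain ⟨l, hlen, hlS, hprod⟩ := exists_list_length_eq_wordDist hSsymm hSgen x y
  obtain ⟨m, hm⟩ := exists_pow_length_le_convPow_prod hμ0 hμ1 hc.le hcS l hlS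
  obtain ⟨m', hm'⟩ := exists_pow_length_le_convPow_prod_inv hμ0 hμ1 hSsymm hc.le hcS l hlS
  rw [hlen, hprod] at hm hm'
  refine le_rpow_sub_mul_of_pow_mul_le hφ₀ (pow_pos hc 2) hD
    (tsum_nonneg fun n => convPow_nonneg hμ0 n _) ?_
  rw [← pow_mul, pow_mul', sq, mul_assoc]
  exact mul_mul_tsum_tail_le_of_le_convPow hμ0 hμ1 hsum hφ₀.le hdecay (by positivity) hm hm' M

/-- if the spectral radius of the walk is `< 1`, then the total weight of
admissible trajectories from `x` to `y` of length at least `M` is at most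
`φ^(M - D·d(x,y)) · 𝒢(x,y)` for some `0 < φ < 1` and `D > 0`. -/
theorem stmt5 {G : Type*} [Group G] [Countable G]
    (S : Finset G) (hSsymm : ∀ s ∈ S, s⁻¹ ∈ (S : Set G))
    (hSgen : Subgroup.closure (S : Set G) = ⊤)
    (μ : G → ℝ) (hμ0 : ∀ g, 0 ≤ μ g) (hμ1 : HasSum μ 1)
    (hgen : Subsemigroup.closure {g : G | 0 < μ g} = ⊤)
    (hrad : ∃ t : ℝ, 1 < t ∧ ∀ x y : G,
      Summable fun n : ℕ => t ^ n * convPow μ n (x⁻¹ * y)) :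
    ∃ φ D : ℝ, 0 < φ ∧ φ < 1 ∧ 0 < D ∧ ∀ x y : G, ∀ M : ℕ,
      (∑' n : ℕ, convPow μ (M + n) (x⁻¹ * y)) ≤
        φ ^ ((M : ℝ) - D * (wordDist (S : Set G) x y : ℝ)) * green μ x y :=
  stmt5_general S hSsymm hSgen μ hμ0 hμ1 hgen hrad
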